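/- For every n ≥ 1, La(n, {V, Λ}) = Pa(n, {B_0, B_1}); that is, the maximum size of a family of subsets of [n] containing no weak copy of V and no weak copy of Λ equals the maximum size of a family of subsets of [n] that is a union of pairwise unrelated copies of the one-element poset B_0 and the two-element chain B_1. -/

import Mathlib

/-- The family `F` contains a (weak) copy of the poset `Q`: there is an injective
`g : Q → F` with `x < y` implying `g x ⊊ g y`. -/
def ContainsCopy (Q : Type*) [PartialOrder Q] {n : ℕ}
    (F : Finset (Finset (Fin n))) : Prop :=
  ∃ g : Q → Finset (Fin n), Function.Injective g ∧ (∀ x, g x ∈ F) ∧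
    ∀ x y : Q, x < y → g x ⊂ g y

/-- The three-element poset `V`, with `a < b`, `a < c`, and `b, c` incomparable. -/
inductive VT : Type
  | a | b | c
  deriving DecidableEq

instance : Fintype VT where
  elems := {VT.a, VT.b, VT.c}
  complete := by
    intro x
    cases x <;> simp

instance : PartialOrder VT where
  le x y := x = y ∨ x = VT.a
  le_refl x := Or.inl rfl
  le_trans := by
    intro x y z hxy hyz
    rcases hxy with rfl | h
    · exact hyz
    · exact Or.inr h
  le_antisymm := by
    intro x y hxy hyx
    rcases hxy with rfl | h
    · rfl
    · rcases hyx with h' | h'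
      · exact h'.symm
      · rw [h, h']

/-- A weak embedding of a poset `P` into the Boolean lattice `B_n`:
an injective map such that `a < b` implies `f a ⊊ f b`. -/
def IsWeakEmbedding {P : Type*} [PartialOrder P] {n : ℕ} (f : P → Finset (Fin n)) : Prop :=
  Function.Injective f ∧ ∀ a b : P, a < b → f a ⊂ f b

/-- A (weak) copy of the poset `P` in `B_n`: the image of a weak embedding. -/
def IsCopy (P : Type*) [PartialOrder P] [Fintype P] {n : ℕ}
    (C : Finset (Finset (Fin n))) : Prop :=
  ∃ f : P → Finset (Fin n), IsWeakEmbedding f ∧ C = Finset.image f Finset.univ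

/-- Two families of subsets of `[n]` are unrelated if no member of one is comparable
(under inclusion) with a member of the other. -/
def Unrelated {n : ℕ} (F₁ F₂ : Finset (Finset (Fin n))) : Prop :=
  ∀ A ∈ F₁, ∀ B ∈ F₂, ¬ A ⊆ B ∧ ¬ B ⊆ A

/-- `F` is a union of pairwise unrelated copies of `P` in `B_n`. -/
def IsUnionOfUnrelatedCopies (P : Type*) [PartialOrder P] [Fintype P] {n : ℕ}
    (F : Finset (Finset (Fin n))) : Prop :=
  ∃ 𝒞 : Finset (Finset (Finset (Fin n))),
    (∀ C ∈ 𝒞, IsCopy P C) ∧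
    (∀ C₁ ∈ 𝒞, ∀ C₂ ∈ 𝒞, C₁ ≠ C₂ → Unrelated C₁ C₂) ∧
    F = 𝒞.sup id

/-- `Pa P n`: the maximum size of a family of subsets of `[n]` that is a union of
pairwise unrelated copies of `P`. -/
noncomputable def Pa (P : Type*) [PartialOrder P] [Fintype P] (n : ℕ) : ℕ :=
  sSup {m | ∃ F : Finset (Finset (Fin n)), IsUnionOfUnrelatedCopies P F ∧ F.card = m}

/-- `F` is a union of pairwise unrelated copies of posets from the collection
`{B₀, B₁}`, where `B₀ = Fin 1` is the one-element poset and `B₁ = Fin 2` is the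
two-element chain. -/
def IsUnionOfUnrelatedCopies01 {n : ℕ} (F : Finset (Finset (Fin n))) : Prop :=
  ∃ 𝒞 : Finset (Finset (Finset (Fin n))),
    (∀ C ∈ 𝒞, IsCopy (Fin 1) C ∨ IsCopy (Fin 2) C) ∧
    (∀ C₁ ∈ 𝒞, ∀ C₂ ∈ 𝒞, C₁ ≠ C₂ → Unrelated C₁ C₂) ∧
    F = 𝒞.sup id

/-!
A family contains neither `V` nor `Λ` exactly when each of its members is comparable with at
most one other member (a third comparable set would form a `V`, a `Λ`, or a three-chain, which
contains a `V`). For such a family the sets comparable with a given member form a chain of at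
most two sets, these classes partition the family, and distinct classes are unrelated, so the
family is a union of unrelated copies of `B₀` and `B₁`. Conversely, in such a union every set is
comparable only with the sets of its own copy. Hence both extremal problems range over the same
families.
-/

open Finset

section Comparables

variable {α : Type*} [PartialOrder α] [DecidableLE α] {F : Finset α} {a x y : α}

def comparables (F : Finset α) (a : α) : Finset α :=
  {x ∈ F | x ≤ a ∨ a ≤ x}

lemma mem_comparables : x ∈ comparables F a ↔ x ∈ F ∧ (x ≤ a ∨ a ≤ x) :=
  Finset.mem_filter

lemma self_mem_comparables (ha : a ∈ F) : a ∈ comparables F a :=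
  mem_comparables.2 ⟨ha, .inl le_rfl⟩

lemma comparables_subset (F : Finset α) (a : α) : comparables F a ⊆ F :=
  Finset.filter_subset _ _

variable [DecidableEq α]

lemma card_comparables_le_two_iff :
    (∀ a ∈ F, #(comparables F a) ≤ 2) ↔
      (∀ a ∈ F, ∀ b ∈ F, ∀ c ∈ F, a < b → a < c → b = c) ∧
      (∀ a ∈ F, ∀ b ∈ F, ∀ c ∈ F, b < a → c < a → b = c) := by
  constructor
  · intro h
    have eq_of_mem {a b c : α} (ha : a ∈ F) (hb : b ∈ comparables F a)
        (hc : c ∈ comparables F a) (hab : a ≠ b) (hac : a ≠ c) : b = c := by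
      by_contra hbc
      have : ({a, b, c} : Finset α) ⊆ comparables F a := by
        simp [Finset.insert_subset_iff, self_mem_comparables ha, hb, hc]
      have := (Finset.card_le_card this).trans (h a ha)
      rw [Finset.card_eq_three.2 ⟨a, b, c, hab, hac, hbc, rfl⟩] at this
      omega
    refine ⟨fun a ha b hb c hc hab hac => ?_, fun a ha b hb c hc hba hca => ?_⟩
    · exact eq_of_mem ha (mem_comparables.2 ⟨hb, .inr hab.le⟩)
        (mem_comparables.2 ⟨hc, .inr hac.le⟩) hab.ne hac.ne
    · exact eq_of_mem ha (mem_comparables.2 ⟨hb, .inl hba.le⟩)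
        (mem_comparables.2 ⟨hc, .inl hca.le⟩) hba.ne' hca.ne'
  · rintro ⟨hV, hΛ⟩ a ha
    have : #((comparables F a).erase a) ≤ 1 := by
      refine Finset.card_le_one.2 fun x hx y hy => ?_
      obtain ⟨hxa, hxF, hx⟩ := Finset.mem_erase.1 hx |>.imp_right mem_comparables.1
      obtain ⟨hya, hyF, hy⟩ := Finset.mem_erase.1 hy |>.imp_right mem_comparables.1
      rcases hx with hx | hx <;> rcases hy with hy | hy
      · exact hΛ a ha x hxF y hyF (hx.lt_of_ne hxa) (hy.lt_of_ne hya)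
      · exact absurd (hV x hxF a ha y hyF (hx.lt_of_ne hxa) ((hx.lt_of_ne hxa).trans_le hy))
          hya.symm
      · exact absurd (hV y hyF a ha x hxF (hy.lt_of_ne hya) ((hy.lt_of_ne hya).trans_le hx))
          hxa.symm
      · exact hV a ha x hxF y hyF (hx.lt_of_ne' hxa) (hy.lt_of_ne' hya)
    rw [Finset.card_erase_of_mem (self_mem_comparables ha)] at this
    omega

variable (h : ∀ a ∈ F, #(comparables F a) ≤ 2)
include h

lemma comparables_eq_of_mem (ha : a ∈ F) (hx : x ∈ comparables F a) :
    comparables F x = comparables F a := by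
  obtain rfl | hxa := eq_or_ne x a
  · rfl
  obtain ⟨hxF, hcomp⟩ := mem_comparables.1 hx
  have hpair_card : #({a, x} : Finset α) = 2 := Finset.card_pair hxa.symm
  have ha' : {a, x} ⊆ comparables F a := by
    simp [Finset.insert_subset_iff, self_mem_comparables ha, hx]
  have hx' : {a, x} ⊆ comparables F x := by
    simp [Finset.insert_subset_iff, self_mem_comparables hxF, mem_comparables, ha, hcomp.symm]
  rw [← Finset.eq_of_subset_of_card_le ha' (hpair_card ▸ h a ha),
    ← Finset.eq_of_subset_of_card_le hx' (hpair_card ▸ h x hxF)]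

lemma comparables_eq_of_le (hx : x ∈ F) (hy : y ∈ F) (hxy : x ≤ y) :
    comparables F x = comparables F y :=
  comparables_eq_of_mem h hy (mem_comparables.2 ⟨hx, .inl hxy⟩)

lemma isChain_comparables (ha : a ∈ F) : IsChain (· ≤ ·) (comparables F a : Set α) := by
  intro x hx y hy hxy
  obtain rfl | hxa := eq_or_ne x a
  · exact (mem_comparables.1 hy).2.symm
  obtain rfl | hya := eq_or_ne y a
  · exact (mem_comparables.1 hx).2
  have : #((comparables F a).erase a) ≤ 1 := by
    rw [Finset.card_erase_of_mem (self_mem_comparables ha)]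
    exact Nat.sub_le_of_le_add (h a ha)
  exact absurd (Finset.card_le_one.1 this x (Finset.mem_erase.2 ⟨hxa, hx⟩) y
    (Finset.mem_erase.2 ⟨hya, hy⟩)) hxy

end Comparables

lemma VT.lt_iff {x y : VT} : x < y ↔ x = .a ∧ y ≠ .a := by
  change (x = y ∨ x = .a) ∧ ¬(y = x ∨ y = .a) ↔ _
  cases x <;> cases y <;> simp

def VT.elim {β : Type*} (a b c : β) : VT → β
  | .a => a
  | .b => b
  | .c => c

lemma VT.elim_injective {β : Type*} {a b c : β} (hab : a ≠ b) (hac : a ≠ c) (hbc : b ≠ c) :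
    Function.Injective (VT.elim a b c) := by
  intro x y
  cases x <;> cases y <;> simp [VT.elim, hab, hac, hbc, hab.symm, hac.symm, hbc.symm]

section Copies

variable {n : ℕ} {F : Finset (Finset (Fin n))}

lemma not_containsCopy_VT_iff :
    ¬ContainsCopy VT F ↔ ∀ A ∈ F, ∀ B ∈ F, ∀ C ∈ F, A ⊂ B → A ⊂ C → B = C := by
  refine ⟨fun h A hA B hB C hC hAB hAC => by_contra fun hBC => h ?_, ?_⟩
  · refine ⟨VT.elim A B C, VT.elim_injective hAB.ne hAC.ne hBC, ?_, ?_⟩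
    · rintro (_ | _ | _) <;> assumption
    · rintro x y hxy
      obtain ⟨rfl, hy⟩ := VT.lt_iff.1 hxy
      cases y <;> first | exact absurd rfl hy | assumption
  · rintro h ⟨g, hg, hgF, hlt⟩
    exact VT.noConfusion <| hg <| h _ (hgF .a) _ (hgF .b) _ (hgF .c)
      (hlt _ _ (VT.lt_iff.2 ⟨rfl, VT.noConfusion⟩)) (hlt _ _ (VT.lt_iff.2 ⟨rfl, VT.noConfusion⟩))

lemma not_containsCopy_VT_dual_iff :
    ¬ContainsCopy VTᵒᵈ F ↔ ∀ A ∈ F, ∀ B ∈ F, ∀ C ∈ F, B ⊂ A → C ⊂ A → B = C := by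
  refine ⟨fun h A hA B hB C hC hBA hCA => by_contra fun hBC => h ?_, ?_⟩
  · refine ⟨VT.elim A B C ∘ OrderDual.ofDual,
      VT.elim_injective hBA.ne' hCA.ne' hBC |>.comp OrderDual.ofDual.injective, ?_, ?_⟩
    · rintro (_ | _ | _) <;> assumption
    · rintro x y hxy
      obtain ⟨hy, hx⟩ := VT.lt_iff.1 (OrderDual.toDual_lt_toDual.1 hxy)
      revert hx hy
      cases x <;> cases y <;> first | exact fun _ _ => by assumption | simp
  · rintro h ⟨g, hg, hgF, hlt⟩
    have hb := hlt (.toDual .b) (.toDual .a) (VT.lt_iff.2 ⟨rfl, VT.noConfusion⟩)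
    have hc := hlt (.toDual .c) (.toDual .a) (VT.lt_iff.2 ⟨rfl, VT.noConfusion⟩)
    exact VT.noConfusion <| OrderDual.toDual.injective <| hg <|
      h _ (hgF _) _ (hgF _) _ (hgF _) hb hc

lemma isCopy_singleton (A : Finset (Fin n)) : IsCopy (Fin 1) {A} :=
  ⟨fun _ => A, ⟨fun x y _ => Subsingleton.elim x y,
    fun x y hxy => (hxy.ne (Subsingleton.elim x y)).elim⟩, by simp⟩

lemma isCopy_pair {A B : Finset (Fin n)} (h : A ⊂ B) : IsCopy (Fin 2) {A, B} := by
  refine ⟨![A, B], ⟨?_, ?_⟩, ?_⟩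
  · intro i j hij
    fin_cases i <;> fin_cases j <;> simp_all [h.ne, h.ne']
  · intro i j hij
    fin_cases i <;> fin_cases j <;> simp_all
  · ext X
    simp [Fin.exists_fin_two, eq_comm]

lemma IsCopy.card_le {P : Type*} [PartialOrder P] [Fintype P] {C : Finset (Finset (Fin n))}
    (h : IsCopy P C) : #C ≤ Fintype.card P := by
  obtain ⟨f, -, rfl⟩ := h
  exact Finset.card_image_le

lemma isCopy_of_isChain {C : Finset (Finset (Fin n))}
    (hC : IsChain (· ≤ ·) (C : Set (Finset (Fin n)))) (hne : C.Nonempty) (hcard : #C ≤ 2) :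
    IsCopy (Fin 1) C ∨ IsCopy (Fin 2) C := by
  obtain hC1 | hC2 : #C = 1 ∨ #C = 2 := by have := hne.card_pos; omega
  · obtain ⟨A, rfl⟩ := Finset.card_eq_one.1 hC1
    exact .inl (isCopy_singleton A)
  · obtain ⟨A, B, hAB, rfl⟩ := Finset.card_eq_two.1 hC2
    right
    rcases hC (by simp) (by simp) hAB with h | h
    · exact isCopy_pair (h.lt_of_ne hAB)
    · exact Finset.pair_comm A B ▸ isCopy_pair (h.lt_of_ne hAB.symm)

lemma isUnionOfUnrelatedCopies01_of_card_comparables_le_two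
    (h : ∀ A ∈ F, #(comparables F A) ≤ 2) : IsUnionOfUnrelatedCopies01 F := by
  refine ⟨F.image (comparables F), ?_, ?_, ?_⟩
  · simp only [Finset.mem_image, forall_exists_index, and_imp]
    rintro _ A hA rfl
    exact isCopy_of_isChain (isChain_comparables h hA) ⟨A, self_mem_comparables hA⟩ (h A hA)
  · simp only [Finset.mem_image, forall_exists_index, and_imp]
    rintro _ A₁ hA₁ rfl _ A₂ hA₂ rfl hne X hX Y hY
    have hXF := comparables_subset F A₁ hX
    have hYF := comparables_subset F A₂ hY
    rw [← comparables_eq_of_mem h hA₁ hX, ← comparables_eq_of_mem h hA₂ hY] at hne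
    exact ⟨fun hXY => hne (comparables_eq_of_le h hXF hYF hXY),
      fun hYX => hne (comparables_eq_of_le h hYF hXF hYX).symm⟩
  · ext A
    simp only [Finset.mem_sup, Finset.mem_image, id, exists_exists_and_eq_and]
    exact ⟨fun hA => ⟨A, hA, self_mem_comparables hA⟩,
      fun ⟨B, _, hAB⟩ => comparables_subset F B hAB⟩

lemma IsUnionOfUnrelatedCopies01.card_comparables_le_two (hF : IsUnionOfUnrelatedCopies01 F) :
    ∀ A ∈ F, #(comparables F A) ≤ 2 := by
  obtain ⟨𝒞, hcopy, hunrel, rfl⟩ := hF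
  intro A hA
  obtain ⟨C, hC, hAC⟩ := Finset.mem_sup.1 hA
  have hsub : comparables (𝒞.sup id) A ⊆ C := by
    intro X hX
    obtain ⟨hXF, hXA⟩ := mem_comparables.1 hX
    obtain ⟨D, hD, hXD⟩ := Finset.mem_sup.1 hXF
    by_contra hXC
    have := hunrel D hD C hC (by rintro rfl; exact hXC hXD) X hXD A hAC
    exact hXA.elim this.1 this.2
  refine (Finset.card_le_card hsub).trans ?_
  rcases hcopy C hC with h | h
  · exact h.card_le.trans (by simp)
  · exact h.card_le.trans (by simp)

lemma isUnionOfUnrelatedCopies01_iff_not_containsCopy :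
    IsUnionOfUnrelatedCopies01 F ↔ ¬ContainsCopy VT F ∧ ¬ContainsCopy VTᵒᵈ F := by
  rw [not_containsCopy_VT_iff, not_containsCopy_VT_dual_iff, ← card_comparables_le_two_iff]
  exact ⟨IsUnionOfUnrelatedCopies01.card_comparables_le_two,
    isUnionOfUnrelatedCopies01_of_card_comparables_le_two⟩

end Copies

theorem la_eq_pa_general (n : ℕ) :
    sSup {m | ∃ F : Finset (Finset (Fin n)),
        ¬ContainsCopy VT F ∧ ¬ContainsCopy VTᵒᵈ F ∧ F.card = m}
      = sSup {m | ∃ F : Finset (Finset (Fin n)),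
          IsUnionOfUnrelatedCopies01 F ∧ F.card = m} := by
  simp only [isUnionOfUnrelatedCopies01_iff_not_containsCopy, and_assoc]

/-- For `n ≥ 1`, `La(n, {V, Λ}) = Pa(n, {B₀, B₁})`: the maximum
size of a family with no weak copy of `V` and no weak copy of `Λ` equals the maximum
size of a family that is a union of pairwise unrelated copies of the one-element
poset and of the two-element chain. -/
theorem la_eq_pa (n : ℕ) (hn : 1 ≤ n) :
    sSup {m | ∃ F : Finset (Finset (Fin n)),
        ¬ContainsCopy VT F ∧ ¬ContainsCopy VTᵒᵈ F ∧ F.card = m}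
      = sSup {m | ∃ F : Finset (Finset (Fin n)),
          IsUnionOfUnrelatedCopies01 F ∧ F.card = m} :=
  la_eq_pa_general n
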